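/- arXiv:math/0610378 — 2 statements merged into one kernel-verified Lean document; each statement's English description precedes it below -/
import Mathlib

section
/- The function u : ℝ² → ℂ defined by u(x,η) = (1 + ∂_η)[(1−iη)² γ₂(−x) γ₂(−η) e^{ixη}], where γ₂(t) = t·e^{-t} for t ≥ 0 and 0 otherwise, belongs to L²(ℝ²) ∩ L¹(ℝ²). -/
/-!
Off the null line `η = 0`, `u` vanishes unless `x < 0` and `η < 0`, because `γ₂(-x)` vanishes
for `x ≥ 0` and `γ₂(-·)` vanishes near every `η > 0`. On the open quadrant
`γ₂(-x) γ₂(-η) = x η e^{x+η}`, so `u = x e^x e^{(1+ix)η} P(x, η)` with `P` a polynomial, and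
`|u| ≤ poly(|x|, |η|) e^{-|x|-|η|}`. Since `(1 + s)^n e^{-s} ≤ C (1 + s²)⁻¹`, `u` is dominated by
`C (1 + x²)⁻¹ (1 + η²)⁻¹`, a product of functions lying in `L¹(ℝ) ∩ L²(ℝ)`.
-/

open MeasureTheory Complex
open scoped Nat

section ProductDomination

variable {α β E : Type*} [MeasurableSpace α] [MeasurableSpace β] [NormedAddCommGroup E]
  {μ : Measure α} {ν : Measure β} {f : α × β → E} {a : α → ℝ} {b : β → ℝ}

theorem memLp_two_of_ae_norm_le_mul_prod (hf : AEStronglyMeasurable f (μ.prod ν))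
    (ha : MemLp a 2 μ) (hb : MemLp b 2 ν) (h : ∀ᵐ p ∂μ.prod ν, ‖f p‖ ≤ a p.1 * b p.2) :
    MemLp f 2 (μ.prod ν) := by
  have hmeas : AEStronglyMeasurable (fun p : α × β => a p.1 * b p.2) (μ.prod ν) :=
    ha.1.comp_fst.mul hb.1.comp_snd
  have hab : MemLp (fun p : α × β => a p.1 * b p.2) 2 (μ.prod ν) := by
    rw [memLp_two_iff_integrable_sq hmeas]
    simpa only [mul_pow] using
      ((memLp_two_iff_integrable_sq ha.1).1 ha).mul_prod ((memLp_two_iff_integrable_sq hb.1).1 hb)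
  exact hab.of_le hf (h.mono fun p hp => hp.trans (le_abs_self _))

end ProductDomination

theorem memLp_two_inv_one_add_sq : MemLp (fun x : ℝ => (1 + x ^ 2)⁻¹) 2 := by
  have hmeas := integrable_inv_one_add_sq.aestronglyMeasurable
  rw [memLp_two_iff_integrable_sq hmeas]
  refine integrable_inv_one_add_sq.mono' (hmeas.pow 2) (ae_of_all _ fun x => ?_)
  have h0 : 0 ≤ (1 + x ^ 2)⁻¹ := by positivity
  have h1 : (1 + x ^ 2)⁻¹ ≤ 1 := inv_le_one_of_one_le₀ (by nlinarith)
  rw [Real.norm_of_nonneg (by positivity)]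
  nlinarith

theorem one_add_pow_mul_exp_neg_le (n : ℕ) {s : ℝ} (hs : 0 ≤ s) :
    (1 + s) ^ n * Real.exp (-s) ≤ (n + 2)! * Real.exp 1 * (1 + s ^ 2)⁻¹ := by
  have hpow : (1 + s) ^ (n + 2) ≤ (n + 2)! * Real.exp (1 + s) := by
    have := Real.pow_div_factorial_le_exp (1 + s) (by linarith) (n + 2)
    rwa [div_le_iff₀ (by positivity), mul_comm] at this
  rw [le_mul_inv_iff₀ (by positivity)]
  calc (1 + s) ^ n * Real.exp (-s) * (1 + s ^ 2) ≤ (1 + s) ^ (n + 2) * Real.exp (-s) := by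
        rw [mul_right_comm, pow_add]
        gcongr
        nlinarith
    _ ≤ (n + 2)! * Real.exp (1 + s) * Real.exp (-s) := by gcongr
    _ = (n + 2)! * Real.exp 1 := by rw [mul_assoc, ← Real.exp_add, add_neg_cancel_right]

noncomputable def gammaTwo (t : ℝ) : ℝ := if 0 ≤ t then t * Real.exp (-t) else 0

noncomputable def gKernel (x η : ℝ) : ℂ :=
  (1 - I * (η : ℂ)) ^ 2 * (gammaTwo (-x) : ℂ) * (gammaTwo (-η) : ℂ) * cexp (I * (x : ℂ) * (η : ℂ))

noncomputable def quadrantKernel (x t : ℝ) : ℂ :=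
  (x * Real.exp x : ℂ) * ((1 - I * t) ^ 2 * (t * cexp ((1 + I * x) * t)))

noncomputable def quadrantFactor (x η : ℝ) : ℂ :=
  (1 - I * η) ^ 2 * η - 2 * I * (1 - I * η) * η + (1 - I * η) ^ 2 * (1 + η * (1 + I * x))

theorem gammaTwo_of_nonpos {t : ℝ} (ht : t ≤ 0) : gammaTwo t = 0 := by
  rcases ht.lt_or_eq with ht | rfl
  · exact if_neg ht.not_ge
  · simp [gammaTwo]

@[fun_prop]
theorem continuous_gammaTwo : Continuous gammaTwo :=
  Continuous.if_le (by fun_prop) continuous_const continuous_const continuous_id fun t ht => by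
    simp [← ht]

theorem continuous_uncurry_gKernel : Continuous (Function.uncurry gKernel) := by
  unfold gKernel; fun_prop

theorem gKernel_eq_zero_of_nonneg {x : ℝ} (hx : 0 ≤ x) : gKernel x = 0 := by
  ext η
  simp [gKernel, gammaTwo_of_nonpos (neg_nonpos.2 hx)]

theorem gKernel_eq_zero_of_pos (x : ℝ) {η : ℝ} (hη : 0 < η) : gKernel x η = 0 := by
  simp [gKernel, gammaTwo_of_nonpos (neg_nonpos.2 hη.le)]

theorem gKernel_eq_quadrantKernel {x η : ℝ} (hx : x < 0) (hη : η < 0) :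
    gKernel x η = quadrantKernel x η := by
  have hexp : cexp ((1 + I * x) * η) = Real.exp η * cexp (I * x * η) := by
    rw [add_mul, one_mul, Complex.exp_add, Complex.ofReal_exp]
  rw [gKernel, quadrantKernel, gammaTwo, gammaTwo, if_pos (by linarith), if_pos (by linarith),
    hexp]
  push_cast
  rw [neg_neg, neg_neg]
  ring

theorem quadrantKernel_add_deriv (x η : ℝ) :
    quadrantKernel x η + deriv (quadrantKernel x) η =
      (x * Real.exp x : ℂ) * cexp ((1 + I * x) * η) * quadrantFactor x η := by
  have hsq := (((hasDerivAt_id (η : ℂ)).const_mul I).const_sub 1).pow 2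
  have hexp := (hasDerivAt_id (η : ℂ)).mul ((hasDerivAt_id (η : ℂ)).const_mul (1 + I * x)).cexp
  have h : HasDerivAt (quadrantKernel x) _ η :=
    ((hsq.mul hexp).const_mul (x * Real.exp x : ℂ)).comp_ofReal
  rw [h.deriv, quadrantKernel, quadrantFactor]
  simp only [Pi.mul_apply, Pi.pow_apply, id_eq, Nat.cast_ofNat, Nat.add_one_sub_one, pow_one]
  ring

theorem norm_one_sub_I_mul_le (η : ℝ) : ‖1 - I * η‖ ≤ 1 + |η| :=
  (norm_sub_le _ _).trans (by simp)

theorem norm_quadrantFactor_le (x η : ℝ) :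
    ‖quadrantFactor x η‖ ≤ 4 * (1 + |x|) * (1 + |η|) ^ 3 := by
  have h1 := norm_one_sub_I_mul_le η
  have h2 : ‖1 + η * (1 + I * x)‖ ≤ 1 + |η| * (1 + |x|) := by
    refine (norm_add_le _ _).trans ?_
    rw [norm_one, norm_mul, Complex.norm_real, Real.norm_eq_abs]
    gcongr
    exact (norm_add_le _ _).trans (by simp)
  calc ‖quadrantFactor x η‖
      ≤ ‖1 - I * η‖ ^ 2 * |η| + 2 * ‖1 - I * η‖ * |η| +
          ‖1 - I * η‖ ^ 2 * ‖1 + η * (1 + I * x)‖ := by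
        refine (norm_add_le _ _).trans (add_le_add ((norm_sub_le _ _).trans (le_of_eq ?_)) ?_)
        all_goals simp [norm_pow]
    _ ≤ (1 + |η|) ^ 2 * |η| + 2 * (1 + |η|) * |η| + (1 + |η|) ^ 2 * (1 + |η| * (1 + |x|)) := by
        gcongr
    _ ≤ 4 * (1 + |x|) * (1 + |η|) ^ 3 := by
        have ha := abs_nonneg x
        have hb := abs_nonneg η
        nlinarith [mul_nonneg ha hb, mul_nonneg (mul_nonneg ha hb) hb,
          mul_nonneg (mul_nonneg ha hb) (mul_nonneg hb hb), mul_nonneg hb (mul_nonneg hb hb)]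

theorem norm_quadrantKernel_add_deriv_le {x η : ℝ} (hx : x ≤ 0) (hη : η ≤ 0) :
    ‖quadrantKernel x η + deriv (quadrantKernel x) η‖ ≤
      11520 * Real.exp 2 * (1 + x ^ 2)⁻¹ * (1 + η ^ 2)⁻¹ := by
  have hc : ‖(x * Real.exp x : ℂ)‖ = |x| * Real.exp (-|x|) := by
    rw [abs_of_nonpos hx, neg_neg, norm_mul, Complex.norm_real, Complex.norm_real,
      Real.norm_eq_abs, Real.norm_of_nonneg (Real.exp_pos x).le, abs_of_nonpos hx]
  have he : ‖cexp ((1 + I * x) * η)‖ = Real.exp (-|η|) := by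
    rw [Complex.norm_exp, abs_of_nonpos hη, neg_neg]
    simp
  rw [quadrantKernel_add_deriv, norm_mul, norm_mul, hc, he]
  calc |x| * Real.exp (-|x|) * Real.exp (-|η|) * ‖quadrantFactor x η‖
      ≤ (1 + |x|) * Real.exp (-|x|) * Real.exp (-|η|) * (4 * (1 + |x|) * (1 + |η|) ^ 3) := by
        gcongr
        · linarith
        · exact norm_quadrantFactor_le x η
    _ = 4 * ((1 + |x|) ^ 2 * Real.exp (-|x|)) * ((1 + |η|) ^ 3 * Real.exp (-|η|)) := by ring
    _ ≤ 4 * ((2 + 2)! * Real.exp 1 * (1 + |x| ^ 2)⁻¹) *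
          ((3 + 2)! * Real.exp 1 * (1 + |η| ^ 2)⁻¹) := by
        gcongr 4 * ?_ * ?_ <;> exact one_add_pow_mul_exp_neg_le _ (abs_nonneg _)
    _ = 11520 * Real.exp 2 * (1 + x ^ 2)⁻¹ * (1 + η ^ 2)⁻¹ := by
        rw [sq_abs, sq_abs, show (2 : ℝ) = 1 + 1 by norm_num, Real.exp_add]
        simp only [Nat.factorial]
        push_cast
        ring

theorem norm_gKernel_add_deriv_le (x : ℝ) {η : ℝ} (hη : η ≠ 0) :
    ‖gKernel x η + deriv (gKernel x) η‖ ≤ 11520 * Real.exp 2 * (1 + x ^ 2)⁻¹ * (1 + η ^ 2)⁻¹ := by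
  have hC : 0 ≤ 11520 * Real.exp 2 * (1 + x ^ 2)⁻¹ * (1 + η ^ 2)⁻¹ := by positivity
  rcases le_or_gt 0 x with hx | hx
  · simpa [gKernel_eq_zero_of_nonneg hx] using hC
  rcases hη.lt_or_gt with hη | hη
  · have hev : gKernel x =ᶠ[nhds η] quadrantKernel x :=
      Filter.eventually_of_mem (Iio_mem_nhds hη) fun t ht => gKernel_eq_quadrantKernel hx ht
    rw [hev.deriv_eq, gKernel_eq_quadrantKernel hx hη]
    exact norm_quadrantKernel_add_deriv_le hx.le hη.le
  · have hev : gKernel x =ᶠ[nhds η] 0 :=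
      Filter.eventually_of_mem (Ioi_mem_nhds hη) fun t ht => gKernel_eq_zero_of_pos x ht
    simpa [hev.deriv_eq, gKernel_eq_zero_of_pos x hη] using hC

/-- The function u(x,η) = (1+∂_η)[(1−iη)²γ₂(−x)γ₂(−η)e^{ixη}] belongs to L²(ℝ²) ∩ L¹(ℝ²). -/
theorem u_memL2_and_L1
    (γ₂ : ℝ → ℝ) (hγ₂ : ∀ t, γ₂ t = if 0 ≤ t then t * Real.exp (-t) else 0)
    (g : ℝ → ℝ → ℂ)
    (hg : ∀ x η, g x η =
      (1 - Complex.I * (η : ℂ)) ^ 2 * (γ₂ (-x) : ℂ) * (γ₂ (-η) : ℂ) *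
        Complex.exp (Complex.I * (x : ℂ) * (η : ℂ)))
    (u : ℝ × ℝ → ℂ)
    (hu : ∀ p : ℝ × ℝ, u p = g p.1 p.2 + deriv (g p.1) p.2) :
    MemLp u 2 (volume : Measure (ℝ × ℝ)) ∧ Integrable u (volume : Measure (ℝ × ℝ)) := by
  obtain rfl : γ₂ = gammaTwo := funext hγ₂
  obtain rfl : g = gKernel := funext₂ hg
  obtain rfl : u = fun p => gKernel p.1 p.2 + deriv (gKernel p.1) p.2 := funext hu
  have hmeas : AEStronglyMeasurable (fun p : ℝ × ℝ => gKernel p.1 p.2 + deriv (gKernel p.1) p.2) :=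
    (continuous_uncurry_gKernel.stronglyMeasurable.add
      (stronglyMeasurable_deriv_with_param continuous_uncurry_gKernel)).aestronglyMeasurable
  have hbound : ∀ᵐ p : ℝ × ℝ, ‖gKernel p.1 p.2 + deriv (gKernel p.1) p.2‖ ≤
      11520 * Real.exp 2 * (1 + p.1 ^ 2)⁻¹ * (1 + p.2 ^ 2)⁻¹ :=
    (Measure.quasiMeasurePreserving_snd.ae (Measure.ae_ne volume 0)).mono
      fun p hp => norm_gKernel_add_deriv_le p.1 hp
  rw [Measure.volume_eq_prod] at hmeas hbound ⊢
  exact ⟨memLp_two_of_ae_norm_le_mul_prod hmeas (memLp_two_inv_one_add_sq.const_mul _)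
      memLp_two_inv_one_add_sq hbound,
    ((integrable_inv_one_add_sq.const_mul _).mul_prod integrable_inv_one_add_sq).mono' hmeas hbound⟩
end

section
/- Let Ω be a compact Hausdorff space, C = C(Ω), E a Hilbert C-module, and suppose for each λ ∈ Ω there is a Hilbert space H_λ and a linear map V_λ : E → H_λ satisfying ⟨V_λ f, V_λ g⟩_{H_λ} = ⟨f,g⟩(λ) for all f,g ∈ E. If T : E → E is adjointable and for each λ there is a bounded operator T_λ on H_λ with V_λ ∘ T = T_λ ∘ V_λ on E, then ‖T‖ = sup_{λ∈Ω} ‖T_λ‖ (where T_λ is restricted to the closure of the range of V_λ). -/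
/-!
Writing `⟨f, g⟩(λ) = ⟪V_λ f, V_λ g⟫`, the norm of `E` is the supremum over `λ` of the seminorms
`‖V_λ ·‖`, which gives `‖T‖ ≤ sup`. For the converse one needs `‖V_λ (T f)‖ ≤ ‖T‖` whenever
`‖V_λ f‖ ≤ 1`, although `‖f‖` itself may be large. The operator `A = T* T` is symmetric for the
semi-inner product `⟪V_λ ·, V_λ ·⟫`, so Cauchy–Schwarz gives `‖V_λ (Aⁿ f)‖² ≤ ‖V_λ (A²ⁿ f)‖`;
iterating, `‖V_λ (A f)‖ ^ 2ᵏ ≤ ‖f‖ ‖A‖ ^ 2ᵏ` for every `k`, hence `‖V_λ (A f)‖ ≤ ‖A‖ ≤ ‖T‖²`,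
and `‖V_λ (T f)‖² ≤ ‖V_λ (A f)‖`.
-/

open scoped ComplexOrder InnerProductSpace

theorem le_of_forall_pow_two_pow_le_mul {x a M : ℝ} (ha : 0 ≤ a)
    (h : ∀ k : ℕ, x ^ 2 ^ k ≤ M * a ^ 2 ^ k) : x ≤ a := by
  by_contra! hax
  rcases ha.eq_or_lt with rfl | ha
  · simpa [hax.not_ge] using h 0
  · have hr : 1 < x / a := (one_lt_div ha).2 hax
    obtain ⟨k, hk⟩ := pow_unbounded_of_one_lt M hr
    have hM : (x / a) ^ 2 ^ k ≤ M := by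
      rw [div_pow, div_le_iff₀ (pow_pos ha _)]
      exact h k
    exact (hk.trans_le (pow_le_pow_right₀ hr.le Nat.lt_two_pow_self.le)).not_ge hM

section

variable {𝕜 E H : Type*} [RCLike 𝕜] [NormedAddCommGroup E] [NormedSpace 𝕜 E]
  [NormedAddCommGroup H] [InnerProductSpace 𝕜 H]

def IsAdjointPairVia (V : E →ₗ[𝕜] H) (T T' : E →L[𝕜] E) : Prop :=
  ∀ f g, ⟪V (T f), V g⟫_𝕜 = ⟪V f, V (T' g)⟫_𝕜

namespace IsAdjointPairVia

variable {V : E →ₗ[𝕜] H} {T T' : E →L[𝕜] E}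

theorem symm (hT : IsAdjointPairVia V T T') : IsAdjointPairVia V T' T := fun f g => by
  rw [← inner_conj_symm, ← hT, inner_conj_symm]

theorem comp {S S' : E →L[𝕜] E} (hS : IsAdjointPairVia V S S') (hT : IsAdjointPairVia V T T') :
    IsAdjointPairVia V (S.comp T) (T'.comp S') := fun f g => by
  simp only [ContinuousLinearMap.comp_apply, hS _ g, hT f]

theorem pow {A : E →L[𝕜] E} (hA : IsAdjointPairVia V A A) (n : ℕ) :
    IsAdjointPairVia V (A ^ n) (A ^ n) := by
  induction n with
  | zero => exact fun f g => rfl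
  | succ n ih =>
    have h := ih.comp hA
    rwa [← ContinuousLinearMap.mul_def, ← ContinuousLinearMap.mul_def, ← pow_succ,
      ← pow_succ'] at h

theorem sq_norm_map_apply_le (hT : IsAdjointPairVia V T T') (f : E) :
    ‖V (T f)‖ ^ 2 ≤ ‖V f‖ * ‖V (T' (T f))‖ := by
  rw [← inner_self_eq_norm_sq (𝕜 := 𝕜), hT]
  exact re_inner_le_norm _ _

theorem norm_map_apply_le_opNorm {A : E →L[𝕜] E} (hA : IsAdjointPairVia V A A)
    (hV : ∀ f, ‖V f‖ ≤ ‖f‖) {f : E} (hf : ‖V f‖ ≤ 1) : ‖V (A f)‖ ≤ ‖A‖ := by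
  set y : ℕ → ℝ := fun k => ‖V ((A ^ 2 ^ k) f)‖
  have hsq : ∀ k, y k ^ 2 ≤ y (k + 1) := fun k => by
    calc y k ^ 2 ≤ ‖V f‖ * ‖V ((A ^ 2 ^ k) ((A ^ 2 ^ k) f))‖ := (hA.pow _).sq_norm_map_apply_le f
      _ ≤ 1 * y (k + 1) := by
        rw [← mul_apply_eq_comp, ← pow_add, ← two_mul, ← pow_succ']
        gcongr
      _ = y (k + 1) := one_mul _
  have hiter : ∀ k, y 0 ^ 2 ^ k ≤ y k := fun k => by
    induction k with
    | zero => simp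
    | succ k ih =>
      rw [pow_succ, pow_mul]
      exact (pow_le_pow_left₀ (by positivity) ih 2).trans (hsq k)
  have hbound : ∀ k, y k ≤ ‖f‖ * ‖A‖ ^ 2 ^ k := fun k =>
    calc y k ≤ ‖(A ^ 2 ^ k) f‖ := hV _
      _ ≤ ‖A ^ 2 ^ k‖ * ‖f‖ := (A ^ 2 ^ k).le_opNorm f
      _ ≤ ‖A‖ ^ 2 ^ k * ‖f‖ := by gcongr; exact norm_pow_le' A (Nat.two_pow_pos k)
      _ = ‖f‖ * ‖A‖ ^ 2 ^ k := mul_comm _ _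
  simpa [y] using le_of_forall_pow_two_pow_le_mul (norm_nonneg A) fun k =>
    (hiter k).trans (hbound k)

theorem sq_norm_map_apply_le_opNorm_mul (hT : IsAdjointPairVia V T T')
    (hV : ∀ f, ‖V f‖ ≤ ‖f‖) {f : E} (hf : ‖V f‖ ≤ 1) : ‖V (T f)‖ ^ 2 ≤ ‖T'‖ * ‖T‖ :=
  calc ‖V (T f)‖ ^ 2 ≤ ‖V f‖ * ‖V ((T'.comp T) f)‖ := hT.sq_norm_map_apply_le f
    _ ≤ 1 * ‖T'.comp T‖ := by
      gcongr
      exact (hT.symm.comp hT).norm_map_apply_le_opNorm hV hf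
    _ ≤ ‖T'‖ * ‖T‖ := (one_mul _).trans_le (T'.opNorm_comp_le T)

end IsAdjointPairVia

theorem norm_apply_le_mul_norm_of_norm_le_one {F G : Type*} [SeminormedAddCommGroup F]
    [NormedSpace 𝕜 F] [SeminormedAddCommGroup G] [NormedSpace 𝕜 G] (V : E →ₗ[𝕜] F)
    (W : E →ₗ[𝕜] G) (hV : ∀ f, ‖V f‖ ≤ ‖f‖) {s : ℝ} (hW : ∀ f, ‖V f‖ ≤ 1 → ‖W f‖ ≤ s)
    (f : E) : ‖W f‖ ≤ s * ‖f‖ := by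
  rcases eq_or_ne f 0 with rfl | hf
  · simp
  have hf' : 0 < ‖f‖ := norm_pos_iff.2 hf
  have := hW ((‖f‖⁻¹ : 𝕜) • f) <| by
    simpa only [map_smul, norm_smul, norm_inv, RCLike.norm_ofReal, abs_norm,
      inv_mul_le_one₀ hf'] using hV f
  simp only [map_smul, norm_smul, norm_inv, RCLike.norm_ofReal, abs_norm,
    inv_mul_le_iff₀ hf'] at this
  exact this.trans_eq (mul_comm _ _)

end

section

variable {𝕜 E ι : Type*} [RCLike 𝕜] [NormedAddCommGroup E] [NormedSpace 𝕜 E]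
  {H : ι → Type*} [∀ i, NormedAddCommGroup (H i)] [∀ i, InnerProductSpace 𝕜 (H i)]
  {V : ∀ i, E →ₗ[𝕜] H i}

theorem opNorm_le_opNorm_of_isAdjointPairVia (hle : ∀ i f, ‖V i f‖ ≤ ‖f‖)
    (hsup : ∀ f c, 0 ≤ c → (∀ i, ‖V i f‖ ≤ c) → ‖f‖ ≤ c) {T T' : E →L[𝕜] E}
    (hT : ∀ i, IsAdjointPairVia (V i) T T') : ‖T'‖ ≤ ‖T‖ := by
  refine T'.opNorm_le_bound (norm_nonneg T) fun g => ?_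
  have hK : 0 ≤ ‖g‖ * (‖T‖ * ‖T' g‖) := by positivity
  have hsq : ‖T' g‖ ^ 2 ≤ ‖g‖ * (‖T‖ * ‖T' g‖) := by
    refine (Real.le_sqrt (norm_nonneg _) hK).1 <| hsup _ _ (Real.sqrt_nonneg _) fun i =>
      (Real.le_sqrt (norm_nonneg _) hK).2 ?_
    calc ‖V i (T' g)‖ ^ 2 ≤ ‖V i g‖ * ‖V i (T (T' g))‖ := (hT i).symm.sq_norm_map_apply_le g
      _ ≤ ‖g‖ * (‖T‖ * ‖T' g‖) := by
        gcongr
        exacts [hle i g, (hle i _).trans (T.le_opNorm _)]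
  rcases (norm_nonneg (T' g)).eq_or_lt with h0 | hpos
  · rw [← h0]
    positivity
  · exact le_of_mul_le_mul_right (by rw [← sq]; linarith) hpos

theorem norm_map_apply_le_opNorm_of_isAdjointPairVia (hle : ∀ i f, ‖V i f‖ ≤ ‖f‖)
    (hsup : ∀ f c, 0 ≤ c → (∀ i, ‖V i f‖ ≤ c) → ‖f‖ ≤ c) {T T' : E →L[𝕜] E}
    (hT : ∀ i, IsAdjointPairVia (V i) T T') {i : ι} {f : E} (hf : ‖V i f‖ ≤ 1) :
    ‖V i (T f)‖ ≤ ‖T‖ := by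
  refine (pow_le_pow_iff_left₀ (norm_nonneg _) (norm_nonneg T) two_ne_zero).1 ?_
  calc ‖V i (T f)‖ ^ 2 ≤ ‖T'‖ * ‖T‖ := (hT i).sq_norm_map_apply_le_opNorm_mul (hle i) hf
    _ ≤ ‖T‖ ^ 2 := by
      rw [sq]
      gcongr
      exact opNorm_le_opNorm_of_isAdjointPairVia hle hsup hT

theorem opNorm_eq_iSup_sSup_of_isAdjointPairVia (hle : ∀ i f, ‖V i f‖ ≤ ‖f‖)
    (hsup : ∀ f c, 0 ≤ c → (∀ i, ‖V i f‖ ≤ c) → ‖f‖ ≤ c) {T T' : E →L[𝕜] E}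
    (hT : ∀ i, IsAdjointPairVia (V i) T T') :
    ‖T‖ = ⨆ i, sSup ((fun f => ‖V i (T f)‖) '' {f | ‖V i f‖ ≤ 1}) := by
  have hbound : ∀ i, ∀ x ∈ (fun f => ‖V i (T f)‖) '' {f | ‖V i f‖ ≤ 1}, x ≤ ‖T‖ := by
    rintro i _ ⟨f, hf, rfl⟩
    exact norm_map_apply_le_opNorm_of_isAdjointPairVia hle hsup hT hf
  have hsSup : ∀ i, sSup ((fun f => ‖V i (T f)‖) '' {f | ‖V i f‖ ≤ 1}) ≤ ‖T‖ := fun i =>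
    Real.sSup_le (hbound i) (norm_nonneg T)
  refine le_antisymm ?_ (Real.iSup_le hsSup (norm_nonneg T))
  have hsup_nonneg : 0 ≤ ⨆ i, sSup ((fun f => ‖V i (T f)‖) '' {f | ‖V i f‖ ≤ 1}) :=
    Real.iSup_nonneg fun i => Real.sSup_nonneg (by rintro _ ⟨f, -, rfl⟩; positivity)
  refine T.opNorm_le_bound hsup_nonneg fun f => hsup _ _ (by positivity) fun i =>
    norm_apply_le_mul_norm_of_norm_le_one (V i) ((V i).comp T.toLinearMap) (hle i)
      (fun g hg => ?_) f
  exact (le_csSup ⟨‖T‖, hbound i⟩ ⟨g, hg, rfl⟩).trans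
    (le_ciSup ⟨‖T‖, Set.forall_mem_range.2 hsSup⟩ i)

end

theorem norm_eq_sup_of_localization_general
    {Ω : Type*} [TopologicalSpace Ω] [CompactSpace Ω]
    {E : Type*} [NormedAddCommGroup E] [NormedSpace ℂ E]
    (ip : E → E → C(Ω, ℂ))
    (hnorm : ∀ f : E, ‖f‖ = Real.sqrt ‖ip f f‖)
    (H : Ω → Type*) [∀ lam, NormedAddCommGroup (H lam)]
    [∀ lam, InnerProductSpace ℂ (H lam)]
    (V : ∀ lam, E →ₗ[ℂ] H lam)
    (hV : ∀ (lam : Ω) (f g : E), (inner ℂ (V lam f) (V lam g) : ℂ) = ip f g lam)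
    (T : E →L[ℂ] E) (T' : E →L[ℂ] E)
    (h_adj : ∀ f g : E, ip (T f) g = ip f (T' g))
    (Tl : ∀ lam, H lam →L[ℂ] H lam)
    (hTl : ∀ (lam : Ω) (f : E), V lam (T f) = Tl lam (V lam f)) :
    ‖T‖ = ⨆ lam : Ω, sSup ((fun f : E => ‖Tl lam (V lam f)‖) '' {f : E | ‖V lam f‖ ≤ 1}) := by
  have hip : ∀ lam f, ‖ip f f lam‖ = ‖V lam f‖ ^ 2 := fun lam f => by
    rw [← hV, ← inner_self_re_eq_norm, inner_self_eq_norm_sq]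
  have hle : ∀ lam f, ‖V lam f‖ ≤ ‖f‖ := fun lam f => by
    rw [hnorm, Real.le_sqrt (norm_nonneg _) (norm_nonneg _), ← hip]
    exact (ip f f).norm_coe_le_norm lam
  have hsup : ∀ f c, 0 ≤ c → (∀ lam, ‖V lam f‖ ≤ c) → ‖f‖ ≤ c := fun f c hc h => by
    rw [hnorm, Real.sqrt_le_left hc, ContinuousMap.norm_le _ (sq_nonneg c)]
    exact fun lam => (hip lam f).trans_le (pow_le_pow_left₀ (norm_nonneg _) (h lam) 2)
  have hT : ∀ lam, IsAdjointPairVia (V lam) T T' := fun lam f g => by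
    rw [hV, hV, h_adj]
  simp_rw [← hTl]
  exact opNorm_eq_iSup_sSup_of_isAdjointPairVia hle hsup hT

/-- Localization of the norm of an adjointable operator on a Hilbert C(Ω)-module:
if V_λ : E → H_λ satisfy ⟨V_λ f, V_λ g⟩ = ⟨f,g⟩(λ) and V_λ ∘ T = T_λ ∘ V_λ, then
‖T‖ is the supremum over λ of the norm of T_λ restricted to the closure of the
range of V_λ. -/
theorem norm_eq_sup_of_localization
    {Ω : Type*} [TopologicalSpace Ω] [CompactSpace Ω] [T2Space Ω]
    {E : Type*} [NormedAddCommGroup E] [NormedSpace ℂ E]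
    (ip : E → E → C(Ω, ℂ))
    (h_add : ∀ f g h : E, ip f (g + h) = ip f g + ip f h)
    (h_smul : ∀ (c : ℂ) (f g : E), ip f (c • g) = c • ip f g)
    (h_star : ∀ f g : E, ip g f = star (ip f g))
    (h_pos : ∀ (f : E) (lam : Ω), 0 ≤ ip f f lam)
    (hnorm : ∀ f : E, ‖f‖ = Real.sqrt ‖ip f f‖)
    (H : Ω → Type*) [∀ lam, NormedAddCommGroup (H lam)]
    [∀ lam, InnerProductSpace ℂ (H lam)]
    (V : ∀ lam, E →ₗ[ℂ] H lam)
    (hV : ∀ (lam : Ω) (f g : E), (inner ℂ (V lam f) (V lam g) : ℂ) = ip f g lam)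
    (T : E →L[ℂ] E) (T' : E →L[ℂ] E)
    (h_adj : ∀ f g : E, ip (T f) g = ip f (T' g))
    (Tl : ∀ lam, H lam →L[ℂ] H lam)
    (hTl : ∀ (lam : Ω) (f : E), V lam (T f) = Tl lam (V lam f)) :
    ‖T‖ = ⨆ lam : Ω, sSup ((fun f : E => ‖Tl lam (V lam f)‖) '' {f : E | ‖V lam f‖ ≤ 1}) :=
  norm_eq_sup_of_localization_general ip hnorm H V hV T T' h_adj Tl hTl
end
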